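/- (Lorenz's condition) Let A be an n×n real matrix whose negative off-diagonal part admits a decomposition A_a⁻ = A^z + A^s with A^z ≤ 0 and A^s ≤ 0 entrywise, such that: (1) A_d + A^z is a nonsingular M-matrix (in particular the diagonal entries of A are positive, so A_d is invertible); (2) A_a⁺ ≤ A^z A_d⁻¹ A^s entrywise; (3) there exists a nonzero vector e ≥ 0 with Ae ≥ 0 such that A^z or A^s connects N⁰(Ae) with N⁺(Ae). Then A is a product of two nonsingular M-matrices; in particular A is invertible and A⁻¹ ≥ 0 entrywise. -/

import Mathlib

open Matrix

/-- A real square matrix is a nonsingular M-matrix if its off-diagonal entries are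
nonpositive, it is invertible, and all entries of its inverse are nonnegative. -/
def IsNonsingMMatrix {n : ℕ} (M : Matrix (Fin n) (Fin n) ℝ) : Prop :=
  (∀ i j, i ≠ j → M i j ≤ 0) ∧ IsUnit M.det ∧ ∀ i j, 0 ≤ M⁻¹ i j

/-- `A` connects `N1` with `N2`: from every index in `N1` there is a path of
nonzero entries of `A` of length `r ≥ 1` ending in `N2`. -/
def Connects {n : ℕ} (A : Matrix (Fin n) (Fin n) ℝ) (N1 N2 : Set (Fin n)) : Prop :=
  ∀ i0 ∈ N1, ∃ r : ℕ, 1 ≤ r ∧ ∃ path : ℕ → Fin n, path 0 = i0 ∧ path r ∈ N2 ∧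
    ∀ k, 1 ≤ k → k ≤ r → A (path (k - 1)) (path k) ≠ 0

/-- `N⁰(v)`, the set of indices where `v` vanishes. -/
def Nzero {n : ℕ} (v : Fin n → ℝ) : Set (Fin n) := {i | v i = 0}

/-- `N⁺(v)`, the set of indices where `v` is positive. -/
def Npos {n : ℕ} (v : Fin n → ℝ) : Set (Fin n) := {i | 0 < v i}

/-- Diagonal part `A_d` of a matrix. -/
noncomputable def diagPart {n : ℕ} (A : Matrix (Fin n) (Fin n) ℝ) : Matrix (Fin n) (Fin n) ℝ :=
  Matrix.diagonal fun i => A i i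

/-- Positive off-diagonal part `A_a⁺` of a matrix. -/
noncomputable def offDiagPos {n : ℕ} (A : Matrix (Fin n) (Fin n) ℝ) : Matrix (Fin n) (Fin n) ℝ :=
  Matrix.of fun i j => if i ≠ j ∧ 0 < A i j then A i j else 0

/-- Negative off-diagonal part `A_a⁻ = A - A_d - A_a⁺` of a matrix. -/
noncomputable def offDiagNeg {n : ℕ} (A : Matrix (Fin n) (Fin n) ℝ) : Matrix (Fin n) (Fin n) ℝ :=
  (A - diagPart A) - offDiagPos A


/-!
Write `D = A_d` and `M₁ = D + A^z`. Expanding shows `A = M₁ (1 + D⁻¹ A^s) - R` with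
`R = A^z D⁻¹ A^s - A_a⁺ ≥ 0`, so `A = M₁ M₂` with `M₂ = 1 + D⁻¹ A^s - M₁⁻¹ R`, a Z-matrix.
Since `M₂ e = M₁⁻¹ (A e) ≥ 0`, it remains to see that `M₂` is monotone (`M₂ x ≥ 0 → x ≥ 0`).
For a Z-matrix `B` with `e ≥ 0` and `B e ≥ 0` this holds as soon as `B` connects `N⁰(B e)`
with `N⁺(B e)`: the set where `x + t e` vanishes, for the least `t` making it nonnegative,
is closed under the nonzero entries of `B` and lies in `N⁰(B e)`, so it must be empty.
If `A^s` connects, so does `M₂`, because `M₂` is strictly negative wherever `A^s` is.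
If `A^z` connects, so does `M₁`, and then `M₁⁻¹` is positive along the paths, which forces
`M₂ e = M₁⁻¹ (A e) > 0`.
-/

open Finset

section Nonneg

variable {ι : Type*} [Fintype ι]

lemma mul_apply_nonneg {P Q : Matrix ι ι ℝ} (hP : ∀ i j, 0 ≤ P i j) (hQ : ∀ i j, 0 ≤ Q i j)
    (i j : ι) : 0 ≤ (P * Q) i j :=
  sum_nonneg fun k _ => mul_nonneg (hP i k) (hQ k j)

lemma mulVec_apply_nonneg {P : Matrix ι ι ℝ} {v : ι → ℝ} (hP : ∀ i j, 0 ≤ P i j)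
    (hv : ∀ j, 0 ≤ v j) (i : ι) : 0 ≤ (P *ᵥ v) i :=
  sum_nonneg fun j _ => mul_nonneg (hP i j) (hv j)

lemma eq_zero_of_mulVec_apply_eq_zero {P : Matrix ι ι ℝ} {v : ι → ℝ} (hP : ∀ i j, 0 ≤ P i j)
    (hv : ∀ j, 0 ≤ v j) {i j : ι} (hPv : (P *ᵥ v) i = 0) (hPij : 0 < P i j) : v j = 0 := by
  have hterm := (sum_eq_zero_iff_of_nonneg fun k _ => mul_nonneg (hP i k) (hv k)).1 hPv j
    (mem_univ j)
  exact (mul_eq_zero.1 hterm).resolve_left hPij.ne'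

end Nonneg

def IsZMatrix {ι : Type*} (B : Matrix ι ι ℝ) : Prop :=
  ∀ i j, i ≠ j → B i j ≤ 0

lemma IsZMatrix.mulVec_apply_eq_zero {ι : Type*} [Fintype ι] {B : Matrix ι ι ℝ}
    (hB : IsZMatrix B) {w : ι → ℝ} (hw : ∀ j, 0 ≤ w j) {i : ι} (hwi : w i = 0)
    (hBw : 0 ≤ (B *ᵥ w) i) : (B *ᵥ w) i = 0 ∧ ∀ j, B i j ≠ 0 → w j = 0 := by
  have hterms : ∀ j ∈ univ, B i j * w j ≤ 0 := by
    intro j _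
    rcases eq_or_ne i j with rfl | hij
    · rw [hwi, mul_zero]
    · exact mul_nonpos_of_nonpos_of_nonneg (hB i j hij) (hw j)
  have hzero : (B *ᵥ w) i = 0 := le_antisymm (sum_nonpos hterms) hBw
  refine ⟨hzero, fun j hBij => ?_⟩
  exact (mul_eq_zero.1 ((sum_eq_zero_iff_of_nonpos hterms).1 hzero j (mem_univ j))).resolve_left
    hBij

variable {n : ℕ}

lemma disjoint_Nzero_Npos (v : Fin n → ℝ) : Disjoint (Nzero v) (Npos v) :=
  Set.disjoint_left.2 fun _ hzero hpos => (ne_of_gt hpos) hzero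

namespace Connects

variable {B C : Matrix (Fin n) (Fin n) ℝ} {N₁ N₂ : Set (Fin n)}

lemma mono {N₁' N₂' : Set (Fin n)} (h : Connects B N₁ N₂) (hBC : ∀ i j, B i j ≠ 0 → C i j ≠ 0)
    (h₁ : N₁' ⊆ N₁) (h₂ : N₂ ⊆ N₂') : Connects C N₁' N₂' := by
  intro i hi
  obtain ⟨r, hr, path, hstart, hend, hsteps⟩ := h i (h₁ hi)
  exact ⟨r, hr, path, hstart, h₂ hend, fun k hk hkr => hBC _ _ (hsteps k hk hkr)⟩

lemma eq_empty_of_closed (h : Connects B N₁ N₂) {S : Set (Fin n)} (hS₁ : S ⊆ N₁)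
    (hS₂ : Disjoint S N₂) (hclosed : ∀ i ∈ S, ∀ j, B i j ≠ 0 → j ∈ S) : S = ∅ := by
  refine Set.eq_empty_iff_forall_notMem.2 fun i hi => ?_
  obtain ⟨r, -, path, hstart, hend, hsteps⟩ := h i (hS₁ hi)
  have hpath : ∀ k ≤ r, path k ∈ S := by
    intro k
    induction k with
    | zero => exact fun _ => hstart ▸ hi
    | succ k ih =>
      intro hk
      exact hclosed _ (ih (by omega)) _ (by simpa using hsteps (k + 1) (by omega) hk)
  exact Set.disjoint_left.1 hS₂ (hpath r le_rfl) hend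

end Connects

lemma IsZMatrix.pos_of_connects {B : Matrix (Fin n) (Fin n) ℝ} (hB : IsZMatrix B)
    {g : Fin n → ℝ} (hconn : Connects B (Nzero g) (Npos g)) {w : Fin n → ℝ}
    (hw : ∀ i, 0 ≤ w i) (hBw : ∀ i, 0 ≤ (B *ᵥ w) i) (hg : ∀ i, (B *ᵥ w) i = 0 → g i = 0)
    (i : Fin n) : 0 < w i := by
  have hempty : {i | w i = 0} = ∅ := by
    refine hconn.eq_empty_of_closed (fun j hj => ?_)
      ((disjoint_Nzero_Npos g).mono_left fun j hj => ?_)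
      (fun j hj k hk => (hB.mulVec_apply_eq_zero hw hj (hBw j)).2 k hk) <;>
    exact hg j (hB.mulVec_apply_eq_zero hw hj (hBw j)).1
  exact (hw i).lt_of_ne' fun hi => (Set.eq_empty_iff_forall_notMem.1 hempty) i hi

lemma IsZMatrix.nonneg_of_mulVec_nonneg {B : Matrix (Fin n) (Fin n) ℝ} (hB : IsZMatrix B)
    {e : Fin n → ℝ} (he : ∀ i, 0 ≤ e i) (hBe : ∀ i, 0 ≤ (B *ᵥ e) i)
    (hconn : Connects B (Nzero (B *ᵥ e)) (Npos (B *ᵥ e))) {x : Fin n → ℝ}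
    (hx : ∀ i, 0 ≤ (B *ᵥ x) i) (i : Fin n) : 0 ≤ x i := by
  have he_pos : ∀ i, 0 < e i := hB.pos_of_connects hconn he hBe fun _ => id
  by_contra! hxi
  have : Nonempty (Fin n) := ⟨i⟩
  -- `t` is the least scalar with `x + t • e ≥ 0`, attained at `i₀`.
  obtain ⟨i₀, hi₀⟩ := Finite.exists_max fun j => -x j / e j
  set t := -x i₀ / e i₀
  have ht : 0 < t := (div_pos (neg_pos.2 hxi) (he_pos i)).trans_le (hi₀ i)
  have hw : ∀ j, 0 ≤ (x + t • e) j := fun j => by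
    have := (div_le_iff₀ (he_pos j)).1 (hi₀ j)
    simp only [Pi.add_apply, Pi.smul_apply, smul_eq_mul]
    linarith
  have hBw : ∀ j, (B *ᵥ (x + t • e)) j = (B *ᵥ x) j + t * (B *ᵥ e) j := fun j => by
    simp [mulVec_add, mulVec_smul]
  have hw_pos := hB.pos_of_connects hconn hw
    (fun j => (hBw j).symm ▸ add_nonneg (hx j) (mul_nonneg ht.le (hBe j)))
    fun j hj => by
      rw [hBw] at hj
      nlinarith [hx j, hBe j]
  have hw₀ : (x + t • e) i₀ = 0 := by
    simp only [Pi.add_apply, Pi.smul_apply, smul_eq_mul, t, div_mul_cancel₀ _ (he_pos i₀).ne']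
    ring
  exact (hw_pos i₀).ne' hw₀

namespace IsNonsingMMatrix

variable {M : Matrix (Fin n) (Fin n) ℝ}

lemma inv_mul_apply_eq (h : IsNonsingMMatrix M) (i j : Fin n) :
    M⁻¹ i j * M j j + ∑ l ∈ univ.erase j, M⁻¹ i l * M l j = (1 : Matrix (Fin n) (Fin n) ℝ) i j := by
  rw [← nonsing_inv_mul M h.2.1, mul_apply]
  exact add_sum_erase _ (fun l => M⁻¹ i l * M l j) (mem_univ j)

lemma sum_erase_inv_apply_mul_apply_nonpos (h : IsNonsingMMatrix M) (i j : Fin n)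
    (s : Finset (Fin n)) (hs : s ⊆ univ.erase j) : ∑ l ∈ s, M⁻¹ i l * M l j ≤ 0 :=
  sum_nonpos fun l hl =>
    mul_nonpos_of_nonneg_of_nonpos (h.2.2 i l) (h.1 l j (ne_of_mem_erase (hs hl)))

lemma one_le_inv_apply_self_mul_apply_self (h : IsNonsingMMatrix M) (i : Fin n) :
    1 ≤ M⁻¹ i i * M i i := by
  have hsum := h.inv_mul_apply_eq i i
  rw [one_apply_eq] at hsum
  linarith [h.sum_erase_inv_apply_mul_apply_nonpos i i _ subset_rfl]

lemma inv_apply_self_pos (h : IsNonsingMMatrix M) (i : Fin n) : 0 < M⁻¹ i i :=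
  (h.2.2 i i).lt_of_ne' fun h0 => by
    linarith [h0 ▸ h.one_le_inv_apply_self_mul_apply_self i, zero_mul (M i i)]

lemma apply_self_pos (h : IsNonsingMMatrix M) (i : Fin n) : 0 < M i i :=
  pos_of_mul_pos_right (one_pos.trans_le (h.one_le_inv_apply_self_mul_apply_self i)) (h.2.2 i i)

lemma inv_apply_pos_of_ne_zero (h : IsNonsingMMatrix M) {i k j : Fin n} (hik : 0 < M⁻¹ i k)
    (hkj : M k j ≠ 0) : 0 < M⁻¹ i j := by
  rcases eq_or_ne k j with rfl | hkj'
  · exact hik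
  have hk : k ∈ univ.erase j := mem_erase.2 ⟨hkj', mem_univ k⟩
  have hsplit := add_sum_erase _ (fun l => M⁻¹ i l * M l j) hk
  have hrest := h.sum_erase_inv_apply_mul_apply_nonpos i j _ (erase_subset k _)
  have hstep : M⁻¹ i k * M k j < 0 := mul_neg_of_pos_of_neg hik ((h.1 k j hkj').lt_of_ne hkj)
  have hone : 0 ≤ (1 : Matrix (Fin n) (Fin n) ℝ) i j := by
    rw [one_apply]; split_ifs <;> norm_num
  have hsum := h.inv_mul_apply_eq i j
  exact pos_of_mul_pos_left (by linarith) (h.apply_self_pos j).le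

lemma inv_mulVec_pos (h : IsNonsingMMatrix M) {v : Fin n → ℝ} (hv : ∀ i, 0 ≤ v i)
    (hconn : Connects M (Nzero v) (Npos v)) (i : Fin n) : 0 < (M⁻¹ *ᵥ v) i := by
  refine (mulVec_apply_nonneg h.2.2 hv i).lt_of_ne' fun hi => ?_
  have hS : {j | 0 < M⁻¹ i j} ⊆ Nzero v := fun j hj =>
    eq_zero_of_mulVec_apply_eq_zero h.2.2 hv hi hj
  have hempty := hconn.eq_empty_of_closed hS ((disjoint_Nzero_Npos v).mono_left hS)
    fun j hj k hk => h.inv_apply_pos_of_ne_zero hj hk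
  exact (Set.eq_empty_iff_forall_notMem.1 hempty) i (h.inv_apply_self_pos i)

lemma of_monotone {B : Matrix (Fin n) (Fin n) ℝ} (hZ : IsZMatrix B)
    (hmono : ∀ x : Fin n → ℝ, (∀ i, 0 ≤ (B *ᵥ x) i) → ∀ i, 0 ≤ x i) :
    IsNonsingMMatrix B := by
  have hker : ∀ x, B *ᵥ x = 0 → x = 0 := fun x hx => funext fun i =>
    le_antisymm (by simpa using hmono (-x) (by simp [mulVec_neg, hx]) i)
      (hmono x (by simp [hx]) i)
  have hdet : IsUnit B.det := isUnit_iff_ne_zero.2 fun h0 => by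
    obtain ⟨v, hv0, hv⟩ := exists_mulVec_eq_zero_iff.2 h0
    exact hv0 (hker v hv)
  refine ⟨hZ, hdet, fun i j => hmono (fun k => B⁻¹ k j) (fun i' => ?_) i⟩
  change 0 ≤ (B * B⁻¹) i' j
  rw [mul_nonsing_inv B hdet, one_apply]
  split_ifs <;> norm_num

lemma mul_inv_nonneg {M₁ M₂ : Matrix (Fin n) (Fin n) ℝ} (h₁ : IsNonsingMMatrix M₁)
    (h₂ : IsNonsingMMatrix M₂) (i j : Fin n) : 0 ≤ (M₁ * M₂)⁻¹ i j := by
  rw [Matrix.mul_inv_rev]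
  exact mul_apply_nonneg h₂.2.2 h₁.2.2 i j

end IsNonsingMMatrix

section Lorenz

variable {A Az As : Matrix (Fin n) (Fin n) ℝ}

lemma diagPart_mul_diagonal_inv (hA : ∀ i, A i i ≠ 0) :
    diagPart A * diagonal (fun i => (A i i)⁻¹) = 1 := by
  rw [diagPart, diagonal_mul_diagonal, ← diagonal_one]
  exact congrArg diagonal (funext fun i => mul_inv_cancel₀ (hA i))

lemma inv_diagPart (hA : ∀ i, A i i ≠ 0) : (diagPart A)⁻¹ = diagonal fun i => (A i i)⁻¹ :=
  inv_eq_right_inv (diagPart_mul_diagonal_inv hA)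

lemma diagPart_add_apply_of_ne {i j : Fin n} (hij : i ≠ j) : (diagPart A + Az) i j = Az i j := by
  rw [Matrix.add_apply, diagPart, diagonal_apply_ne _ hij, zero_add]

lemma apply_self_pos_of_isNonsingMMatrix_diagPart_add (hAz : ∀ i j, Az i j ≤ 0)
    (h : IsNonsingMMatrix (diagPart A + Az)) (i : Fin n) : 0 < A i i := by
  have := h.apply_self_pos i
  rw [Matrix.add_apply, diagPart, diagonal_apply_eq] at this
  linarith [hAz i i]

lemma apply_self_eq_zero_of_offDiagNeg_eq_add (hdecomp : offDiagNeg A = Az + As)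
    (hAz : ∀ i j, Az i j ≤ 0) (hAs : ∀ i j, As i j ≤ 0) (i : Fin n) :
    Az i i = 0 ∧ As i i = 0 := by
  have h := congrFun (congrFun hdecomp i) i
  simp only [offDiagNeg, diagPart, offDiagPos, Matrix.sub_apply, diagonal_apply_eq, of_apply,
    ne_eq, not_true_eq_false, false_and, if_false, sub_self, Matrix.add_apply] at h
  constructor <;> linarith [hAz i i, hAs i i]

/-- The second factor `M₂` of the Lorenz splitting `A = (A_d + A^z) M₂`. -/
noncomputable def lorenzFactor (A Az As : Matrix (Fin n) (Fin n) ℝ) : Matrix (Fin n) (Fin n) ℝ :=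
  1 + (diagPart A)⁻¹ * As - (diagPart A + Az)⁻¹ * (Az * (diagPart A)⁻¹ * As - offDiagPos A)

lemma diagPart_add_mul_lorenzFactor (hdecomp : offDiagNeg A = Az + As)
    (hunit : IsUnit (diagPart A + Az).det) (hA : ∀ i, A i i ≠ 0) :
    (diagPart A + Az) * lorenzFactor A Az As = A := by
  have hD : diagPart A * (diagPart A)⁻¹ = 1 := by
    rw [inv_diagPart hA, diagPart_mul_diagonal_inv hA]
  have hA_eq : A = diagPart A + offDiagPos A + (Az + As) := by
    rw [← hdecomp, offDiagNeg]; abel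
  rw [lorenzFactor, Matrix.mul_sub, ← Matrix.mul_assoc, mul_nonsing_inv _ hunit, Matrix.one_mul,
    Matrix.mul_add, Matrix.mul_one, Matrix.add_mul, ← Matrix.mul_assoc, hD, Matrix.one_mul, ← Matrix.mul_assoc]
  conv_rhs => rw [hA_eq]
  abel

lemma lorenzFactor_apply_le (hAz : ∀ i j, Az i j ≤ 0) (h₁ : IsNonsingMMatrix (diagPart A + Az))
    (h₂ : ∀ i j, offDiagPos A i j ≤ (Az * (diagPart A)⁻¹ * As) i j) {i j : Fin n} (hij : i ≠ j) :
    lorenzFactor A Az As i j ≤ (A i i)⁻¹ * As i j := by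
  have hR : 0 ≤ ((diagPart A + Az)⁻¹ * (Az * (diagPart A)⁻¹ * As - offDiagPos A)) i j :=
    mul_apply_nonneg h₁.2.2 (fun k l => sub_nonneg.2 (h₂ k l)) i j
  have hA i := (apply_self_pos_of_isNonsingMMatrix_diagPart_add hAz h₁ i).ne'
  have hDAs : ((diagPart A)⁻¹ * As) i j = (A i i)⁻¹ * As i j := by
    rw [inv_diagPart hA, diagonal_mul]
  rw [lorenzFactor, Matrix.sub_apply, Matrix.add_apply, one_apply_ne hij, hDAs, zero_add]
  linarith

lemma isZMatrix_lorenzFactor (hAz : ∀ i j, Az i j ≤ 0) (hAs : ∀ i j, As i j ≤ 0)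
    (h₁ : IsNonsingMMatrix (diagPart A + Az))
    (h₂ : ∀ i j, offDiagPos A i j ≤ (Az * (diagPart A)⁻¹ * As) i j) :
    IsZMatrix (lorenzFactor A Az As) := fun i j hij =>
  (lorenzFactor_apply_le hAz h₁ h₂ hij).trans <| mul_nonpos_of_nonneg_of_nonpos
    (inv_nonneg.2 (apply_self_pos_of_isNonsingMMatrix_diagPart_add hAz h₁ i).le) (hAs i j)

lemma lorenzFactor_mulVec (hdecomp : offDiagNeg A = Az + As)
    (hunit : IsUnit (diagPart A + Az).det) (hA : ∀ i, A i i ≠ 0) (e : Fin n → ℝ) :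
    lorenzFactor A Az As *ᵥ e = (diagPart A + Az)⁻¹ *ᵥ (A *ᵥ e) := by
  have h := nonsing_inv_mul_cancel_left _ (lorenzFactor A Az As) hunit
  rw [diagPart_add_mul_lorenzFactor hdecomp hunit hA] at h
  rw [mulVec_mulVec, h]

section

variable (hdecomp : offDiagNeg A = Az + As) (hAz : ∀ i j, Az i j ≤ 0) (hAs : ∀ i j, As i j ≤ 0)
  (h₁ : IsNonsingMMatrix (diagPart A + Az)) {e : Fin n → ℝ} (hAe : ∀ i, 0 ≤ (A *ᵥ e) i)
include hdecomp hAz hAs h₁ hAe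

lemma mulVec_lorenzFactor_pos_of_connects_Az
    (hconn : Connects Az (Nzero (A *ᵥ e)) (Npos (A *ᵥ e))) (i : Fin n) :
    0 < (lorenzFactor A Az As *ᵥ e) i := by
  have hA i := (apply_self_pos_of_isNonsingMMatrix_diagPart_add hAz h₁ i).ne'
  rw [lorenzFactor_mulVec hdecomp h₁.2.1 hA]
  refine h₁.inv_mulVec_pos hAe (hconn.mono (fun i j hij => ?_) subset_rfl subset_rfl) i
  rcases eq_or_ne i j with rfl | hne
  · exact absurd (apply_self_eq_zero_of_offDiagNeg_eq_add hdecomp hAz hAs i).1 hij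
  · rwa [diagPart_add_apply_of_ne hne]

lemma connects_lorenzFactor_of_connects_As
    (h₂ : ∀ i j, offDiagPos A i j ≤ (Az * (diagPart A)⁻¹ * As) i j)
    (hconn : Connects As (Nzero (A *ᵥ e)) (Npos (A *ᵥ e))) :
    Connects (lorenzFactor A Az As) (Nzero (lorenzFactor A Az As *ᵥ e))
      (Npos (lorenzFactor A Az As *ᵥ e)) := by
  have hpos i := apply_self_pos_of_isNonsingMMatrix_diagPart_add hAz h₁ i
  rw [lorenzFactor_mulVec hdecomp h₁.2.1 fun i => (hpos i).ne']
  have hzero {i : Fin n} (hi : ((diagPart A + Az)⁻¹ *ᵥ (A *ᵥ e)) i = 0) : (A *ᵥ e) i = 0 :=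
    eq_zero_of_mulVec_apply_eq_zero h₁.2.2 hAe hi (h₁.inv_apply_self_pos i)
  refine hconn.mono (fun i j hij => ?_) (fun i hi => hzero hi) fun i hi =>
    (mulVec_apply_nonneg h₁.2.2 hAe i).lt_of_ne' fun h0 => (ne_of_gt hi) (hzero h0)
  have hne : i ≠ j := by
    rintro rfl
    exact hij (apply_self_eq_zero_of_offDiagNeg_eq_add hdecomp hAz hAs i).2
  exact ((lorenzFactor_apply_le hAz h₁ h₂ hne).trans_lt
    (mul_neg_of_pos_of_neg (inv_pos.2 (hpos i)) ((hAs i j).lt_of_ne hij))).ne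

end

lemma isNonsingMMatrix_lorenzFactor (hdecomp : offDiagNeg A = Az + As)
    (hAz : ∀ i j, Az i j ≤ 0) (hAs : ∀ i j, As i j ≤ 0) (h₁ : IsNonsingMMatrix (diagPart A + Az))
    (h₂ : ∀ i j, offDiagPos A i j ≤ (Az * (diagPart A)⁻¹ * As) i j)
    {e : Fin n → ℝ} (he : ∀ i, 0 ≤ e i) (hAe : ∀ i, 0 ≤ (A *ᵥ e) i)
    (hconn : Connects Az (Nzero (A *ᵥ e)) (Npos (A *ᵥ e)) ∨
      Connects As (Nzero (A *ᵥ e)) (Npos (A *ᵥ e))) :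
    IsNonsingMMatrix (lorenzFactor A Az As) := by
  have hZ := isZMatrix_lorenzFactor hAz hAs h₁ h₂
  have hA i := (apply_self_pos_of_isNonsingMMatrix_diagPart_add hAz h₁ i).ne'
  have hMe : ∀ i, 0 ≤ (lorenzFactor A Az As *ᵥ e) i := by
    rw [lorenzFactor_mulVec hdecomp h₁.2.1 hA]
    exact mulVec_apply_nonneg h₁.2.2 hAe
  have hconn₂ : Connects (lorenzFactor A Az As) (Nzero (lorenzFactor A Az As *ᵥ e))
      (Npos (lorenzFactor A Az As *ᵥ e)) := by
    rcases hconn with hconn | hconn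
    · exact fun i hi => absurd hi
        (mulVec_lorenzFactor_pos_of_connects_Az hdecomp hAz hAs h₁ hAe hconn i).ne'
    · exact connects_lorenzFactor_of_connects_As hdecomp hAz hAs h₁ hAe h₂ hconn
  exact .of_monotone hZ fun _ hx => hZ.nonneg_of_mulVec_nonneg he hMe hconn₂ hx

end Lorenz

theorem lorenz_condition_general
    {n : ℕ} (A Az As : Matrix (Fin n) (Fin n) ℝ)
    (hdecomp : offDiagNeg A = Az + As)
    (hAz : ∀ i j, Az i j ≤ 0) (hAs : ∀ i j, As i j ≤ 0)
    (h1 : IsNonsingMMatrix (diagPart A + Az))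
    (h2 : ∀ i j, offDiagPos A i j ≤ (Az * (diagPart A)⁻¹ * As) i j)
    (e : Fin n → ℝ) (he : ∀ i, 0 ≤ e i)
    (hAe : ∀ i, 0 ≤ A.mulVec e i)
    (hconn : Connects Az (Nzero (A.mulVec e)) (Npos (A.mulVec e)) ∨
      Connects As (Nzero (A.mulVec e)) (Npos (A.mulVec e))) :
    (∃ M1 M2 : Matrix (Fin n) (Fin n) ℝ,
      IsNonsingMMatrix M1 ∧ IsNonsingMMatrix M2 ∧ A = M1 * M2) ∧
      IsUnit A.det ∧ ∀ i j, 0 ≤ A⁻¹ i j := by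
  have hA i := (apply_self_pos_of_isNonsingMMatrix_diagPart_add hAz h1 i).ne'
  have hfact := diagPart_add_mul_lorenzFactor hdecomp h1.2.1 hA
  have hM₂ := isNonsingMMatrix_lorenzFactor hdecomp hAz hAs h1 h2 he hAe hconn
  refine ⟨⟨_, _, h1, hM₂, hfact.symm⟩, ?_, ?_⟩ <;> rw [← hfact]
  · rw [det_mul]
    exact h1.2.1.mul hM₂.2.1
  · exact h1.mul_inv_nonneg hM₂

theorem lorenz_condition
    {n : ℕ} (A Az As : Matrix (Fin n) (Fin n) ℝ)
    (hdecomp : offDiagNeg A = Az + As)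
    (hAz : ∀ i j, Az i j ≤ 0) (hAs : ∀ i j, As i j ≤ 0)
    (h1 : IsNonsingMMatrix (diagPart A + Az))
    (h2 : ∀ i j, offDiagPos A i j ≤ (Az * (diagPart A)⁻¹ * As) i j)
    (e : Fin n → ℝ) (he0 : e ≠ 0) (he : ∀ i, 0 ≤ e i)
    (hAe : ∀ i, 0 ≤ A.mulVec e i)
    (hconn : Connects Az (Nzero (A.mulVec e)) (Npos (A.mulVec e)) ∨
      Connects As (Nzero (A.mulVec e)) (Npos (A.mulVec e))) :
    (∃ M1 M2 : Matrix (Fin n) (Fin n) ℝ,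
      IsNonsingMMatrix M1 ∧ IsNonsingMMatrix M2 ∧ A = M1 * M2) ∧
      IsUnit A.det ∧ ∀ i j, 0 ≤ A⁻¹ i j :=
  lorenz_condition_general A Az As hdecomp hAz hAs h1 h2 e he hAe hconn
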